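/- arXiv:quant-ph/0108074 — 8 statements merged into one kernel-verified Lean document; each statement's English description precedes it below -/
import Mathlib

section
/- In any orthomodular lattice, the relation a ≤₁ b defined by a ∪₁ b = b (where a ∪₁ b := a ∪ (a' ∩ b)) is a partial order: it is reflexive, antisymmetric, and transitive. -/
/-- In any orthomodular lattice, `a ≤₁ b :⟺ a ⊔ (a' ⊓ b) = b` is reflexive,
antisymmetric, and transitive. -/
theorem qle_partial_order {α : Type*} [Lattice α] [BoundedOrder α] (o : α → α)
    (h_inv : ∀ a : α, o (o a) = a)
    (h_anti : ∀ a b : α, a ≤ b → o b ≤ o a)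
    (h_sup : ∀ a : α, a ⊔ o a = ⊤)
    (h_inf : ∀ a : α, a ⊓ o a = ⊥)
    (h_oml : ∀ a b : α, a ≤ b → b = a ⊔ (o a ⊓ b)) :
    (∀ a : α, a ⊔ (o a ⊓ a) = a) ∧
    (∀ a b : α, a ⊔ (o a ⊓ b) = b → b ⊔ (o b ⊓ a) = a → a = b) ∧
    (∀ a b d : α, a ⊔ (o a ⊓ b) = b → b ⊔ (o b ⊓ d) = d → a ⊔ (o a ⊓ d) = d) := by
  refine ⟨fun a => ?_, fun a b h1 h2 => ?_, fun a b d h1 h2 => ?_⟩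
  · rw [inf_comm, h_inf, sup_bot_eq]
  · have hab : a ≤ b := h1 ▸ le_sup_left
    have hba : b ≤ a := h2 ▸ le_sup_left
    exact le_antisymm hab hba
  · have hab : a ≤ b := h1 ▸ le_sup_left
    have hbd : b ≤ d := h2 ▸ le_sup_left
    exact (h_oml a d (hab.trans hbd)).symm
end

section
/- An ortholattice in which the deduction condition ((b ∩₁ a) ≤ c ⟺ a ≤ (b →₁ c)) holds for all a, b, c (where a →₁ b := a' ∪ (a ∩ b) and b ∩₁ a := b ∩ (b' ∪ a)) is orthomodular. -/
/-- An ortholattice in which the deduction condition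
`b ∩₁ a ≤ c ↔ a ≤ b →₁ c` holds is orthomodular. -/
theorem ol_deduction_is_oml {α : Type*} [Lattice α] [BoundedOrder α] (o : α → α)
    (h_inv : ∀ a : α, o (o a) = a)
    (h_anti : ∀ a b : α, a ≤ b → o b ≤ o a)
    (h_sup : ∀ a : α, a ⊔ o a = ⊤)
    (h_inf : ∀ a : α, a ⊓ o a = ⊥)
    (h : ∀ a b d : α, b ⊓ (o b ⊔ a) ≤ d ↔ a ≤ o b ⊔ (b ⊓ d)) :
    ∀ a b : α, a ≤ b → b = a ⊔ (o a ⊓ b) := by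
  intro a b hab
  have key := (h b (o a) b).mp
  rw [h_inv] at key
  have : o a ⊓ (a ⊔ b) ≤ b := by
    rw [sup_eq_right.mpr hab]; exact inf_le_right
  have hb := key this
  exact le_antisymm hb (sup_le hab inf_le_right)
end

section
/- In any orthomodular lattice, a ≤ a ∪₁ b holds for all a, b, but there exists an orthomodular lattice (namely MO2) with elements a, b such that b ≰ a ∪₁ b, where a ∪₁ b := a ∪ (a' ∩ b). -/
/-- A bundled orthomodular lattice. -/
structure OMLStr where
  carrier : Type
  [lat : Lattice carrier]
  [bdd : BoundedOrder carrier]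
  compl : carrier → carrier
  compl_compl : ∀ a, compl (compl a) = a
  compl_anti : ∀ a b, a ≤ b → compl b ≤ compl a
  sup_compl : ∀ a, a ⊔ compl a = ⊤
  inf_compl : ∀ a, a ⊓ compl a = ⊥
  oml : ∀ a b, a ≤ b → b = a ⊔ (compl a ⊓ b)

attribute [instance] OMLStr.lat OMLStr.bdd

inductive MO2 : Type
  | o | x | x' | y | y' | i
  deriving DecidableEq

def MO2.le : MO2 → MO2 → Bool
  | .o, _ => true
  | _, .i => true
  | a, b => a == b

def MO2.sup (a b : MO2) : MO2 :=
  if MO2.le a b then b else if MO2.le b a then a else .i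

def MO2.inf (a b : MO2) : MO2 :=
  if MO2.le a b then a else if MO2.le b a then b else .o

def MO2.compl : MO2 → MO2
  | .o => .i | .i => .o | .x => .x' | .x' => .x | .y => .y' | .y' => .y

instance : Fintype MO2 :=
  ⟨⟨{.o, .x, .x', .y, .y', .i}, by decide⟩, by intro a; cases a <;> decide⟩

instance : LE MO2 := ⟨fun a b => MO2.le a b⟩

instance : DecidableRel (α := MO2) (· ≤ ·) :=
  fun a b => inferInstanceAs (Decidable (MO2.le a b = true))

instance : Lattice MO2 where
  le_refl := by decide
  le_trans := by decide
  le_antisymm := by decide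
  sup := MO2.sup
  inf := MO2.inf
  le_sup_left := by decide
  le_sup_right := by decide
  sup_le := by decide
  inf_le_left := by decide
  inf_le_right := by decide
  le_inf := by decide

instance : BoundedOrder MO2 where
  top := .i
  bot := .o
  le_top := by decide
  bot_le := by decide

def MO2str : OMLStr where
  carrier := MO2
  compl := MO2.compl
  compl_compl := by decide
  compl_anti := by decide
  sup_compl := by decide
  inf_compl := by decide
  oml := by decide

lemma MO2.key : ¬ MO2.y ≤ MO2.sup MO2.x (MO2.inf (MO2.compl MO2.x) MO2.y) := by
  decide

/-- In any OML, `a ≤ a ∪₁ b`, but there is an OML (MO2) with `b ≰ a ∪₁ b`,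
where `a ∪₁ b := a ⊔ (a' ⊓ b)`. -/
theorem left_le_qsup_but_not_right :
    (∀ (L : OMLStr) (a b : L.carrier), a ≤ a ⊔ (L.compl a ⊓ b)) ∧
    (∃ (L : OMLStr) (a b : L.carrier), ¬ b ≤ a ⊔ (L.compl a ⊓ b)) := by
  refine ⟨fun L a b => le_sup_left, ⟨MO2str, MO2.x, MO2.y, MO2.key⟩⟩
end

section
/- In any orthomodular lattice, a ∪ b = b ∪₁ (b' ∩₁ a), where a ∪₁ b := a ∪ (a' ∩ b) and a ∩₁ b := a ∩ (a' ∪ b). -/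
/-- Quantum join with complement `a ∪₁ b := a ⊔ (a' ⊓ b)`. -/
def qsup {α : Type*} [Lattice α] (o : α → α) (a b : α) : α := a ⊔ (o a ⊓ b)

/-- Quantum meet with complement `a ∩₁ b := a ⊓ (a' ⊔ b)`. -/
def qinf {α : Type*} [Lattice α] (o : α → α) (a b : α) : α := a ⊓ (o a ⊔ b)

/-- In any OML, `a ⊔ b = b ∪₁ (b' ∩₁ a)`. -/
theorem sup_eq_qsup_qinf {α : Type*} [Lattice α] [BoundedOrder α] (o : α → α)
    (h_inv : ∀ a : α, o (o a) = a)
    (h_anti : ∀ a b : α, a ≤ b → o b ≤ o a)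
    (h_sup : ∀ a : α, a ⊔ o a = ⊤)
    (h_inf : ∀ a : α, a ⊓ o a = ⊥)
    (h_oml : ∀ a b : α, a ≤ b → b = a ⊔ (o a ⊓ b)) :
    ∀ a b : α, a ⊔ b = qsup o b (qinf o (o b) a) := by
  intro a b
  rw [qsup, qinf, h_inv, ← inf_assoc, inf_idem, sup_comm]
  exact h_oml b (b ⊔ a) le_sup_left
end

section
/- In any orthomodular lattice, a ∪ b = a ∪₁ (b ∪₁ (b' ∩₁ (a ∪₁ (a ∩₁ b')))), where a ∪₁ b := a ∪ (a' ∩ b) and a ∩₁ b := a ∩ (a' ∪ b). -/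
/-- In any OML, `a ⊔ b = a ∪₁ (b ∪₁ (b' ∩₁ (a ∪₁ (a ∩₁ b'))))`. -/
theorem sup_eq_merged_expr {α : Type*} [Lattice α] [BoundedOrder α] (o : α → α)
    (h_inv : ∀ a : α, o (o a) = a)
    (h_anti : ∀ a b : α, a ≤ b → o b ≤ o a)
    (h_sup : ∀ a : α, a ⊔ o a = ⊤)
    (h_inf : ∀ a : α, a ⊓ o a = ⊥)
    (h_oml : ∀ a b : α, a ≤ b → b = a ⊔ (o a ⊓ b)) :
    ∀ a b : α,
      a ⊔ b = qsup o a (qsup o b (qinf o (o b) (qsup o a (qinf o a (o b))))) := by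
  intro a b
  unfold qsup qinf
  have h1 : o a ⊓ (a ⊓ (o a ⊔ o b)) = ⊥ := by
    apply le_bot_iff.mp
    calc o a ⊓ (a ⊓ (o a ⊔ o b)) ≤ o a ⊓ a := inf_le_inf_left _ inf_le_left
      _ = ⊥ := by rw [inf_comm]; exact h_inf a
  rw [h1, sup_bot_eq, h_inv]
  have h2 : o b ⊓ (o b ⊓ (b ⊔ a)) = o b ⊓ (b ⊔ a) := by
    rw [← inf_assoc, inf_idem]
  rw [h2]
  have h3 : b ⊔ o b ⊓ (b ⊔ a) = a ⊔ b := by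
    rw [sup_comm b a] at *
    exact (h_oml b (a ⊔ b) le_sup_right).symm
  rw [h3]
  exact h_oml a (a ⊔ b) le_sup_left
end

section
/- In any orthomodular lattice, if φ_a(c') = φ_b(c'), then a ∪ c = b ∪ c, where φ_a(b) := a ∩ (a' ∪ b). -/
/-- In any OML, `φ_a(c') = φ_b(c') → a ⊔ c = b ⊔ c`, where `φ_a(c) := a ⊓ (a' ⊔ c)`. -/
theorem sasaki_proj_sup {α : Type*} [Lattice α] [BoundedOrder α] (o : α → α)
    (h_inv : ∀ a : α, o (o a) = a)
    (h_anti : ∀ a b : α, a ≤ b → o b ≤ o a)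
    (h_sup : ∀ a : α, a ⊔ o a = ⊤)
    (h_inf : ∀ a : α, a ⊓ o a = ⊥)
    (h_oml : ∀ a b : α, a ≤ b → b = a ⊔ (o a ⊓ b)) :
    ∀ a b d : α, a ⊓ (o a ⊔ o d) = b ⊓ (o b ⊔ o d) → a ⊔ d = b ⊔ d := by
  -- De Morgan: o (a ⊓ d) = o a ⊔ o d
  have demorgan : ∀ a d : α, o (a ⊓ d) = o a ⊔ o d := by
    intro a d
    apply le_antisymm
    · have h1 : o (o a ⊔ o d) ≤ a ⊓ d := by
        refine le_inf ?_ ?_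
        · have := h_anti (o a) (o a ⊔ o d) le_sup_left
          rwa [h_inv] at this
        · have := h_anti (o d) (o a ⊔ o d) le_sup_right
          rwa [h_inv] at this
      have := h_anti _ _ h1
      rwa [h_inv] at this
    · exact sup_le (h_anti _ _ inf_le_left) (h_anti _ _ inf_le_right)
  -- key: a ⊔ d = (a ⊓ (o a ⊔ o d)) ⊔ d
  have key : ∀ a d : α, a ⊔ d = (a ⊓ (o a ⊔ o d)) ⊔ d := by
    intro a d
    have h1 : a = (a ⊓ d) ⊔ (o (a ⊓ d) ⊓ a) := h_oml (a ⊓ d) a inf_le_left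
    rw [demorgan] at h1
    apply le_antisymm
    · refine sup_le ?_ le_sup_right
      calc a = (a ⊓ d) ⊔ ((o a ⊔ o d) ⊓ a) := h1
        _ ≤ (a ⊓ (o a ⊔ o d)) ⊔ d := by
            refine sup_le (le_sup_of_le_right inf_le_right) (le_sup_of_le_left ?_)
            rw [inf_comm]
    · exact sup_le (le_sup_of_le_left inf_le_left) le_sup_right
  intro a b d h
  rw [key a d, key b d, h]
end

section
/- In any orthomodular lattice, a →₁ c = b →₁ c if and only if a' →₁ c = b' →₁ c, where a →₁ b := a' ∪ (a ∩ b). -/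
/-- In any OML, `a →₁ c = b →₁ c ↔ a' →₁ c = b' →₁ c`, where
`a →₁ b := a' ⊔ (a ⊓ b)`. -/
theorem sasaki_imp_compl_iff {α : Type*} [Lattice α] [BoundedOrder α] (o : α → α)
    (h_inv : ∀ a : α, o (o a) = a)
    (h_anti : ∀ a b : α, a ≤ b → o b ≤ o a)
    (h_sup : ∀ a : α, a ⊔ o a = ⊤)
    (h_inf : ∀ a : α, a ⊓ o a = ⊥)
    (h_oml : ∀ a b : α, a ≤ b → b = a ⊔ (o a ⊓ b)) :
    ∀ a b d : α,
      o a ⊔ (a ⊓ d) = o b ⊔ (b ⊓ d) ↔ o (o a) ⊔ (o a ⊓ d) = o (o b) ⊔ (o b ⊓ d) := by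
  have demorgan_sup : ∀ p q : α, o (p ⊔ q) = o p ⊓ o q := by
    intro p q
    apply le_antisymm
    · exact le_inf (h_anti _ _ le_sup_left) (h_anti _ _ le_sup_right)
    · have h1 : p ≤ o (o p ⊓ o q) := by
        have := h_anti _ _ (inf_le_left (a := o p) (b := o q))
        rwa [h_inv] at this
      have h2 : q ≤ o (o p ⊓ o q) := by
        have := h_anti _ _ (inf_le_right (a := o p) (b := o q))
        rwa [h_inv] at this
      have := h_anti _ _ (sup_le h1 h2)
      rwa [h_inv] at this
  have demorgan_inf : ∀ p q : α, o (p ⊓ q) = o p ⊔ o q := by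
    intro p q
    have := demorgan_sup (o p) (o q)
    rw [h_inv, h_inv] at this
    rw [← this, h_inv]
  intro a b d
  set g : α → α := fun t => o t ⊔ (t ⊓ d) with hg
  -- Key identity: g (g a) = g (o a), i.e. (a →₁ d) →₁ d = a' →₁ d.
  have key : ∀ a : α, g (g a) = g (o a) := by
    intro a
    have hga : g a = o a ⊔ (a ⊓ d) := rfl
    -- complement of g a
    have hx : o (g a) = a ⊓ (o a ⊔ o d) := by
      rw [hga, demorgan_sup, h_inv, demorgan_inf]
    -- a = (a ⊓ d) ⊔ o (g a)
    have ha : a = (a ⊓ d) ⊔ o (g a) := by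
      have h0 := h_oml (a ⊓ d) a inf_le_left
      rw [demorgan_inf] at h0
      rw [inf_comm (o a ⊔ o d) a, ← hx] at h0
      exact h0
    -- (g a) ⊓ (o a ⊔ o d) = o a
    have hm : g a ⊓ (o a ⊔ o d) = o a := by
      have hle : o a ≤ g a ⊓ (o a ⊔ o d) :=
        le_inf (hga ▸ le_sup_left) le_sup_left
      have h0 := h_oml (o a) (g a ⊓ (o a ⊔ o d)) hle
      have hbot : o (o a) ⊓ (g a ⊓ (o a ⊔ o d)) = ⊥ := by
        rw [h_inv]
        calc a ⊓ (g a ⊓ (o a ⊔ o d)) = g a ⊓ (a ⊓ (o a ⊔ o d)) := by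
              rw [inf_left_comm]
          _ = g a ⊓ o (g a) := by rw [hx]
          _ = ⊥ := h_inf (g a)
      rw [hbot, sup_bot_eq] at h0
      exact h0
    -- g a ⊓ d ≤ g (o a)
    have hgo : g (o a) = a ⊔ (o a ⊓ d) := by
      show o (o a) ⊔ (o a ⊓ d) = _
      rw [h_inv]
    have had : a ⊓ d ≤ g a := hga ▸ le_sup_right
    have hineq : g a ⊓ d ≤ g (o a) := by
      have hle : a ⊓ d ≤ g a ⊓ d := le_inf had inf_le_right
      have h0 := h_oml (a ⊓ d) (g a ⊓ d) hle
      rw [demorgan_inf] at h0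
      have h1 : (o a ⊔ o d) ⊓ (g a ⊓ d) ≤ o a ⊓ d := by
        have : (o a ⊔ o d) ⊓ (g a ⊓ d) ≤ o a := by
          calc (o a ⊔ o d) ⊓ (g a ⊓ d) ≤ (o a ⊔ o d) ⊓ g a :=
                inf_le_inf_left _ inf_le_left
            _ = o a := by rw [inf_comm]; exact hm
        exact le_inf this (le_trans inf_le_right inf_le_right)
      calc g a ⊓ d = (a ⊓ d) ⊔ ((o a ⊔ o d) ⊓ (g a ⊓ d)) := h0
        _ ≤ a ⊔ (o a ⊓ d) := sup_le_sup inf_le_left h1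
        _ = g (o a) := hgo.symm
    -- now prove g (g a) = g (o a)
    apply le_antisymm
    · have h1 : o (g a) ≤ g (o a) := by
        rw [hx, hgo]; exact le_trans inf_le_left le_sup_left
      exact sup_le h1 hineq
    · rw [hgo]
      have h1 : a ≤ g (g a) := by
        refine le_trans ha.le (sup_le ?_ ?_)
        · exact le_trans (le_inf had inf_le_right) le_sup_right
        · exact le_sup_left
      have h2 : o a ⊓ d ≤ g (g a) := by
        have : o a ⊓ d ≤ g a ⊓ d := inf_le_inf_right _ (hga ▸ le_sup_left)
        exact le_trans this le_sup_right
      exact sup_le h1 h2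
  -- finish
  show g a = g b ↔ o (o a) ⊔ (o a ⊓ d) = o (o b) ⊔ (o b ⊓ d)
  have hoa : o (o a) ⊔ (o a ⊓ d) = g (o a) := rfl
  have hob : o (o b) ⊔ (o b ⊓ d) = g (o b) := rfl
  rw [hoa, hob]
  constructor
  · intro h
    have := congrArg g h
    rwa [key a, key b] at this
  · intro h
    have := congrArg g h
    rw [key (o a), key (o b), h_inv, h_inv] at this
    exact this
end

section
/- In any orthomodular lattice, a ∪₁ b = a ∪₁ (b ∪₁ (a ∩₁ (a ∪₁ b))), where a ∪₁ b := a ∪ (a' ∩ b) and a ∩₁ b := a ∩ (a' ∪ b). -/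
/-- In any OML, `a ∪₁ b = a ∪₁ (b ∪₁ (a ∩₁ (a ∪₁ b)))`. -/
theorem qsup_idem_expansion {α : Type*} [Lattice α] [BoundedOrder α] (o : α → α)
    (h_inv : ∀ a : α, o (o a) = a)
    (h_anti : ∀ a b : α, a ≤ b → o b ≤ o a)
    (h_sup : ∀ a : α, a ⊔ o a = ⊤)
    (h_inf : ∀ a : α, a ⊓ o a = ⊥)
    (h_oml : ∀ a b : α, a ≤ b → b = a ⊔ (o a ⊓ b)) :
    ∀ a b : α, qsup o a b = qsup o a (qsup o b (qinf o a (qsup o a b))) := by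
  -- De Morgan for join
  have hdm : ∀ x y : α, o (x ⊔ y) = o x ⊓ o y := by
    intro x y
    apply le_antisymm
    · exact le_inf (h_anti _ _ le_sup_left) (h_anti _ _ le_sup_right)
    · have h1 : x ⊔ y ≤ o (o x ⊓ o y) := by
        apply sup_le
        · calc x = o (o x) := (h_inv x).symm
            _ ≤ o (o x ⊓ o y) := h_anti _ _ inf_le_left
        · calc y = o (o y) := (h_inv y).symm
            _ ≤ o (o x ⊓ o y) := h_anti _ _ inf_le_right
      have h2 := h_anti _ _ h1
      rwa [h_inv] at h2
  -- De Morgan for meet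
  have hdm' : ∀ x y : α, o (x ⊓ y) = o x ⊔ o y := by
    intro x y
    have : o (o x ⊔ o y) = x ⊓ y := by rw [hdm, h_inv, h_inv]
    rw [← this, h_inv]
  -- key OML fact: if u ≤ o x then o x ⊓ (x ⊔ u) = u
  have hA : ∀ x u : α, u ≤ o x → o x ⊓ (x ⊔ u) = u := by
    intro x u hu
    have hx : x ≤ o u := by
      have := h_anti _ _ hu
      rwa [h_inv] at this
    have homl := h_oml _ _ hx  -- o u = x ⊔ (o x ⊓ o u)
    have : u = o x ⊓ (x ⊔ u) := by
      calc u = o (o u) := (h_inv u).symm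
        _ = o (x ⊔ (o x ⊓ o u)) := by rw [← homl]
        _ = o x ⊓ o (o x ⊓ o u) := by rw [hdm]
        _ = o x ⊓ (x ⊔ u) := by rw [hdm', h_inv, h_inv]
    exact this.symm
  intro a b
  have h1 : qinf o a (qsup o a b) = a := by
    unfold qinf qsup
    exact inf_eq_left.mpr (le_sup_of_le_right le_sup_left)
  rw [h1]
  unfold qsup
  -- goal: a ⊔ (o a ⊓ b) = a ⊔ (o a ⊓ (b ⊔ (o b ⊓ a)))
  have hkey : o a ⊓ (b ⊔ (o b ⊓ a)) = o a ⊓ b := by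
    set c := b ⊔ (o b ⊓ a) with hc
    apply le_antisymm
    · apply le_inf inf_le_left
      -- show o a ⊓ c ≤ b
      have hcb : o b ⊓ c = o b ⊓ a := hA b (o b ⊓ a) inf_le_left
      have hob : o b ≤ a ⊔ o c := by
        have hbc : o c ≤ o b := h_anti _ _ le_sup_left
        have homl := h_oml _ _ hbc  -- o b = o c ⊔ (o (o c) ⊓ o b)
        rw [h_inv] at homl
        calc o b = o c ⊔ (c ⊓ o b) := homl
          _ = o c ⊔ (o b ⊓ a) := by rw [inf_comm, hcb]
          _ ≤ a ⊔ o c := sup_le le_sup_right (le_sup_of_le_left inf_le_right)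
      have : o b ≤ o (o a ⊓ c) := by
        rw [hdm', h_inv]; exact hob
      have h2 := h_anti _ _ this
      rwa [h_inv, h_inv] at h2
    · exact le_inf inf_le_left (le_inf inf_le_left inf_le_right |>.trans (le_trans inf_le_right le_sup_left))
  rw [hkey]
end
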